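/- arXiv:1007.3803 — 2 statements merged into one kernel-verified Lean document; each statement's English description precedes it below -/
import Mathlib

section
/- Let π : [0,1] → V be a piecewise linear path with π(0) = 0 and α a simple root, with Q and P as defined for the root operators. For every n ∈ ℕ with n ≥ 1, the n-fold iterate (e_α)^n π is defined if and only if n ≤ −Q, and (f_α)^n π is defined if and only if n ≤ P. Moreover, if π(1) ∈ P^∨ then P + Q = α(π(1)). -/
noncomputable section

open Module Set Filter

/-- Data of a finite, reduced, irreducible, crystallographic root system `Φ` in the dual of a
real vector space `V`, together with coroots, reflections, simple roots and positive roots. -/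
structure RootSystemSetup (V : Type) [AddCommGroup V] [Module ℝ V] where
  /-- the set of roots, living in the dual space -/
  Φ : Set (Module.Dual ℝ V)
  Φ_finite : Φ.Finite
  Φ_spans : Submodule.span ℝ Φ = ⊤
  zero_not_mem : (0 : Module.Dual ℝ V) ∉ Φ
  /-- the coroot `α^∨` of a root `α` -/
  coroot : Module.Dual ℝ V → V
  pairing_self : ∀ α ∈ Φ, α (coroot α) = 2
  crystallographic : ∀ α ∈ Φ, ∀ β ∈ Φ, ∃ n : ℤ, β (coroot α) = (n : ℝ)
  reduced : ∀ α ∈ Φ, ∀ c : ℝ, c • α ∈ Φ → c = 1 ∨ c = -1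
  neg_mem : ∀ α ∈ Φ, -α ∈ Φ
  coroot_neg : ∀ α ∈ Φ, coroot (-α) = -coroot α
  /-- the reflection `r_α` associated to a root `α` -/
  refl : Module.Dual ℝ V → (V ≃ₗ[ℝ] V)
  refl_apply : ∀ α ∈ Φ, ∀ x : V, refl α x = x - α x • coroot α
  refl_stable : ∀ α ∈ Φ, ∀ β ∈ Φ, β ∘ₗ (refl α).toLinearMap ∈ Φ
  /-- index set of the simple roots -/
  I : Type
  I_fintype : Fintype I
  /-- the simple roots `α_i` -/
  simpleRoot : I → Module.Dual ℝ V
  simple_mem : ∀ i, simpleRoot i ∈ Φ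
  /-- the positive roots `Φ⁺` -/
  pos : Set (Module.Dual ℝ V)
  pos_subset : pos ⊆ Φ
  pos_total : ∀ α ∈ Φ, α ∈ pos ∨ -α ∈ pos
  pos_not_neg : ∀ α ∈ pos, -α ∉ pos
  simple_pos : ∀ i, simpleRoot i ∈ pos
  pos_sum_simple : ∀ α ∈ pos, ∃ c : I → ℝ, (∀ i, 0 ≤ c i) ∧ α = ∑ᶠ i, c i • simpleRoot i
  irreducible : ¬ ∃ Φ₁ Φ₂ : Set (Module.Dual ℝ V), Φ₁.Nonempty ∧ Φ₂.Nonempty ∧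
      Φ₁ ∪ Φ₂ = Φ ∧ ∀ α ∈ Φ₁, ∀ β ∈ Φ₂, α (coroot β) = 0

namespace RootSystemSetup

variable {V : Type} [AddCommGroup V] [Module ℝ V] (S : RootSystemSetup V)

/-- The finite Weyl group `W^v`, generated by the reflections in the roots. -/
def W : Subgroup (V ≃ₗ[ℝ] V) := Subgroup.closure (S.refl '' S.Φ)

/-- The fundamental closed Weyl chamber `C^v`. -/
def Cv : Set V := {x | ∀ i, 0 ≤ S.simpleRoot i x}

/-- The coweight lattice `P^∨ = {x | α(x) ∈ ℤ for all α ∈ Φ}`. -/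
def Pvee : Set V := {x | ∀ α ∈ S.Φ, ∃ n : ℤ, α x = (n : ℝ)}

/-- `P^{∨+} = P^∨ ∩ C^v`, the dominant coweights. -/
def PveePlus : Set V := S.Pvee ∩ S.Cv

/-- The Coxeter length of `w` in `W^v`: the least number of simple reflections whose
product is `w`. -/
def len (w : V ≃ₗ[ℝ] V) : ℕ :=
  sInf {n | ∃ l : List (V ≃ₗ[ℝ] V), l.length = n ∧
    (∀ s ∈ l, ∃ i, s = S.refl (S.simpleRoot i)) ∧ l.prod = w}

/-- One step in the Bruhat-Chevalley order: multiply on the right by a root reflection,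
strictly increasing the length. -/
def BruhatStep (u v : V ≃ₗ[ℝ] V) : Prop :=
  (∃ β ∈ S.Φ, v = u * S.refl β) ∧ S.len u < S.len v

/-- The Bruhat-Chevalley order on `W^v`. -/
def Bruhat : (V ≃ₗ[ℝ] V) → (V ≃ₗ[ℝ] V) → Prop := Relation.ReflTransGen S.BruhatStep

/-- `w` is the minimal-length element of `W^v` mapping `lam` to `v` (i.e. the minimal-length
representative of the coset of `W^v/W^v_lam` sending `lam` to `v`). -/
def IsMinRep (lam v : V) (w : V ≃ₗ[ℝ] V) : Prop :=
  w ∈ S.W ∧ w lam = v ∧ ∀ u ∈ S.W, u lam = v → S.len w ≤ S.len u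

end RootSystemSetup

section RootOperators

variable {V : Type} [AddCommGroup V] [Module ℝ V]

/-- `π : ℝ → V` is a piecewise linear path on `[0,1]`: there is a subdivision
`0 = t_0 < t_1 < ⋯ < t_n = 1` such that `π` is affine on each `[t_{i-1}, t_i]`. -/
def PiecewiseLinear (π : ℝ → V) : Prop :=
  ∃ (n : ℕ) (t : Fin (n + 1) → ℝ), t 0 = 0 ∧ t (Fin.last n) = 1 ∧ StrictMono t ∧
    ∀ i : Fin n, ∃ v : V, ∀ s ∈ Set.Icc (t i.castSucc) (t i.succ),
      π s = π (t i.castSucc) + (s - t i.castSucc) • v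

/-- `Q = min((α∘π)([0,1]) ∩ ℤ)`, the minimal integer value of `α∘π` on `[0,1]`. -/
def Qval (α : Module.Dual ℝ V) (π : ℝ → V) : ℝ :=
  sInf {r : ℝ | (∃ t ∈ Set.Icc (0 : ℝ) 1, α (π t) = r) ∧ ∃ n : ℤ, r = (n : ℝ)}

/-- `P`, the integer part of `α(π(1)) − Q`. -/
def Pval (α : Module.Dual ℝ V) (π : ℝ → V) : ℤ := ⌊α (π 1) - Qval α π⌋

/-- `q = min{t ∈ [0,1] : α(π(t)) = Q}`. -/
def qTime (α : Module.Dual ℝ V) (π : ℝ → V) : ℝ :=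
  sInf {t | t ∈ Set.Icc (0 : ℝ) 1 ∧ α (π t) = Qval α π}

/-- `y = max{t ∈ [0,q] : α(π(t)) = Q + 1}`. -/
def yTime (α : Module.Dual ℝ V) (π : ℝ → V) : ℝ :=
  sSup {t | t ∈ Set.Icc (0 : ℝ) (qTime α π) ∧ α (π t) = Qval α π + 1}

/-- The root operator `e_α` (with coroot `cα`): defined iff `Q ≤ −1`, in which case it is
the concatenation of `π|[0,y]`, the mirror image of `π|[y,q]` in the hyperplane
`{α = Q+1}` (by `s_{α,Q+1} : v ↦ v − (α(v) − (Q+1))·α^∨`), and the corresponding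
translate of `π|[q,1]`. -/
def eOp (α : Module.Dual ℝ V) (cα : V) (π : ℝ → V) : Option (ℝ → V) :=
  if Qval α π ≤ -1 then
    some (fun s =>
      if s ≤ yTime α π then π s
      else if s ≤ qTime α π then π s - (α (π s) - (Qval α π + 1)) • cα
      else π s - π (qTime α π) +
        (π (qTime α π) - (α (π (qTime α π)) - (Qval α π + 1)) • cα))
  else none

/-- `p = max{t ∈ [0,1] : α(π(t)) = Q}`. -/
def pTime (α : Module.Dual ℝ V) (π : ℝ → V) : ℝ :=
  sSup {t | t ∈ Set.Icc (0 : ℝ) 1 ∧ α (π t) = Qval α π}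

/-- `x = min{t ∈ [p,1] : α(π(t)) = Q + 1}`. -/
def xTime (α : Module.Dual ℝ V) (π : ℝ → V) : ℝ :=
  sInf {t | t ∈ Set.Icc (pTime α π) 1 ∧ α (π t) = Qval α π + 1}

/-- The root operator `f_α` (with coroot `cα`): defined iff `P ≥ 1`, in which case it is
the concatenation of `π|[0,p]`, the mirror image of `π|[p,x]` in the hyperplane
`{α = Q}` (by `s_{α,Q} : v ↦ v − (α(v) − Q)·α^∨`), and the corresponding translate of
`π|[x,1]`. -/
def fOp (α : Module.Dual ℝ V) (cα : V) (π : ℝ → V) : Option (ℝ → V) :=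
  if 1 ≤ Pval α π then
    some (fun s =>
      if s ≤ pTime α π then π s
      else if s ≤ xTime α π then π s - (α (π s) - Qval α π) • cα
      else π s - π (xTime α π) + (π (xTime α π) - (α (π (xTime α π)) - Qval α π) • cα))
  else none

end RootOperators

section Iterates

variable {V : Type} [AddCommGroup V] [Module ℝ V]

/-- The `n`-fold iterate `(e_α)^n π` (as a partial operation). -/
def eIter (α : Module.Dual ℝ V) (cα : V) : ℕ → (ℝ → V) → Option (ℝ → V)
  | 0, π => some π
  | n + 1, π => (eIter α cα n π).bind (eOp α cα)

/-- The `n`-fold iterate `(f_α)^n π` (as a partial operation). -/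
def fIter (α : Module.Dual ℝ V) (cα : V) : ℕ → (ℝ → V) → Option (ℝ → V)
  | 0, π => some π
  | n + 1, π => (fIter α cα n π).bind (fOp α cα)

end Iterates

/-!
For a path with `π 0 = 0` and `α ∘ π` continuous, `Q` is an integer, it is attained, and
`α ∘ π > Q - 1` on `[0,1]` (intermediate value theorem). These properties survive the root
operators: `e_α` raises `Q` by one, and `f_α` lowers `Q` by one and `α(π(1))` by two, hence
lowers `P` by one. As `e_α` is defined exactly when `-Q ≥ 1` and `f_α` exactly when `P ≥ 1`,
the iterates are defined exactly `-Q` resp. `P` times. If `α(π(1))` is an integer, then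
`P = α(π(1)) - Q` on the nose.
-/

section LevelSets

def levelSet (g : ℝ → ℝ) (a b L : ℝ) : Set ℝ := {t | t ∈ Icc a b ∧ g t = L}

variable {g : ℝ → ℝ} {a b L t : ℝ}

theorem isCompact_levelSet (hg : ContinuousOn g (Icc a b)) : IsCompact (levelSet g a b L) :=
  isCompact_Icc.of_isClosed_subset
    (hg.preimage_isClosed_of_isClosed isClosed_Icc isClosed_singleton) fun _ ht => ht.1

theorem levelSet_nonempty (hg : ContinuousOn g (Icc a b)) (hab : a ≤ b)
    (hL : L ∈ uIcc (g a) (g b)) : (levelSet g a b L).Nonempty := by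
  rw [← uIcc_of_le hab] at hg
  obtain ⟨t, ht, rfl⟩ := intermediate_value_uIcc hg hL
  exact ⟨t, by rwa [uIcc_of_le hab] at ht, rfl⟩

theorem lt_iff_lt_of_notMem_image (hg : ContinuousOn g (Icc a b)) (hab : a ≤ b)
    (hL : L ∉ g '' Icc a b) : (L < g a ↔ L < g b) ∧ (g a < L ↔ g b < L) := by
  have hconn := (isPreconnected_Icc (a := a) (b := b)).image g hg
  have ha : g a ∈ g '' Icc a b := mem_image_of_mem g (left_mem_Icc.2 hab)
  have hb : g b ∈ g '' Icc a b := mem_image_of_mem g (right_mem_Icc.2 hab)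
  have not_between : ∀ {u v}, u ∈ g '' Icc a b → v ∈ g '' Icc a b → u < L → ¬L < v :=
    fun hu hv huL hLv => hL (hconn.Icc_subset hu hv ⟨huL.le, hLv.le⟩)
  have hne : ∀ s ∈ Icc a b, g s ≠ L := fun s hs hsL => hL ⟨s, hs, hsL⟩
  rcases lt_or_gt_of_ne (hne a (left_mem_Icc.2 hab)) with hga | hga <;>
    rcases lt_or_gt_of_ne (hne b (right_mem_Icc.2 hab)) with hgb | hgb
  · exact ⟨iff_of_false hga.not_gt hgb.not_gt, iff_of_true hga hgb⟩
  · exact absurd hgb (not_between ha hb hga)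
  · exact absurd hga (not_between hb ha hgb)
  · exact ⟨iff_of_true hga hgb, iff_of_false hga.not_gt hgb.not_gt⟩

theorem lt_iff_lt_of_lt_sInf_levelSet (hg : ContinuousOn g (Icc a b)) (ht : t ∈ Icc a b)
    (htT : t < sInf (levelSet g a b L)) : (L < g a ↔ L < g t) ∧ (g a < L ↔ g t < L) :=
  lt_iff_lt_of_notMem_image (hg.mono (Icc_subset_Icc_right ht.2)) ht.1 <| by
    rintro ⟨s, hs, hsL⟩
    have hsT : s ∈ levelSet g a b L := ⟨⟨hs.1, hs.2.trans ht.2⟩, hsL⟩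
    exact htT.not_ge ((csInf_le ⟨a, fun _ hr => hr.1.1⟩ hsT).trans hs.2)

theorem lt_iff_lt_of_sSup_levelSet_lt (hg : ContinuousOn g (Icc a b)) (ht : t ∈ Icc a b)
    (hTt : sSup (levelSet g a b L) < t) : (L < g t ↔ L < g b) ∧ (g t < L ↔ g b < L) :=
  lt_iff_lt_of_notMem_image (hg.mono (Icc_subset_Icc_left ht.1)) ht.2 <| by
    rintro ⟨s, hs, hsL⟩
    have hsT : s ∈ levelSet g a b L := ⟨⟨ht.1.trans hs.1, hs.2⟩, hsL⟩
    exact hTt.not_ge (hs.1.trans (le_csSup ⟨b, fun _ hr => hr.1.2⟩ hsT))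

end LevelSets

theorem isSome_bind_iterate_iff {β R : Type*} [Ring R] [LinearOrder R] [IsStrictOrderedRing R]
    {op : β → Option β} {p : β → Prop} {N : β → R}
    (hdef : ∀ x, p x → ((op x).isSome ↔ 1 ≤ N x))
    (hstep : ∀ x, p x → ∀ y ∈ op x, p y ∧ N y = N x - 1)
    {n : ℕ} (hn : 1 ≤ n) {x : β} (hx : p x) :
    ((fun o => o.bind op)^[n] (some x)).isSome ↔ (n : R) ≤ N x := by
  induction n, hn using Nat.le_induction generalizing x with
  | base => simpa using hdef x hx
  | succ n _ ih =>
    rw [Function.iterate_succ_apply, Option.bind_some]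
    cases hop : op x with
    | none =>
      have hN : N x < 1 := not_le.1 ((hdef x hx).not.1 (by simp [hop]))
      rw [Function.iterate_fixed rfl, Nat.cast_succ]
      simpa using hN.trans_le (le_add_of_nonneg_left n.cast_nonneg)
    | some y =>
      obtain ⟨hy, hN⟩ := hstep x hx y hop
      rw [ih hy, hN, le_sub_iff_add_le, Nat.cast_succ]

section Paths

variable {V : Type} [AddCommGroup V] [Module ℝ V] {α : Module.Dual ℝ V} {τ : ℝ → V} {t : ℝ}

theorem PiecewiseLinear.continuousOn_comp {π : ℝ → V} (hπ : PiecewiseLinear π)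
    (α : Module.Dual ℝ V) : ContinuousOn (fun t => α (π t)) (Icc 0 1) := by
  obtain ⟨n, t, ht0, htn, hmono, hseg⟩ := hπ
  suffices ∀ j : Fin (n + 1), ContinuousOn (fun s => α (π s)) (Icc (t 0) (t j)) by
    simpa [ht0, htn] using this (Fin.last n)
  intro j
  induction j using Fin.induction with
  | zero => simp
  | succ i ih =>
    obtain ⟨v, hv⟩ := hseg i
    have hsegment : ContinuousOn (fun s => α (π s)) (Icc (t i.castSucc) (t i.succ)) := by
      have haffine : Continuous fun s : ℝ => α (π (t i.castSucc)) + (s - t i.castSucc) * α v := by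
        fun_prop
      exact haffine.continuousOn.congr fun s hs => by simp [hv s hs]
    rw [← Icc_union_Icc_eq_Icc (hmono.monotone (Fin.zero_le _))
      (hmono Fin.castSucc_lt_succ).le]
    exact ih.union_of_isClosed hsegment isClosed_Icc isClosed_Icc

/-- The properties of a path that the root operators need, and preserve. -/
structure IsAdmissible (α : Module.Dual ℝ V) (τ : ℝ → V) : Prop where
  continuousOn : ContinuousOn (fun t => α (τ t)) (Icc 0 1)
  apply_zero : α (τ 0) = 0

theorem qval_eq_of_forall_sub_one_lt (k : ℤ) (hk : ∃ t ∈ Icc (0 : ℝ) 1, α (τ t) = k)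
    (hlow : ∀ t ∈ Icc (0 : ℝ) 1, (k : ℝ) - 1 < α (τ t)) : Qval α τ = k := by
  refine IsLeast.csInf_eq ⟨⟨hk, k, rfl⟩, ?_⟩
  rintro _ ⟨⟨t, ht, rfl⟩, n, hn⟩
  have hkn : (k : ℝ) - 1 < n := hn ▸ hlow t ht
  have hkn' : k - 1 < n := by exact_mod_cast hkn
  rw [hn]
  exact_mod_cast (by omega : k ≤ n)

/-- `Q` is `⌈min_{[0,1]} α ∘ τ⌉`, which is attained by the intermediate value theorem. -/
theorem IsAdmissible.exists_qval (h : IsAdmissible α τ) :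
    ∃ k : ℤ, Qval α τ = k ∧ (∃ t ∈ Icc (0 : ℝ) 1, α (τ t) = k) ∧
      ∀ t ∈ Icc (0 : ℝ) 1, (k : ℝ) - 1 < α (τ t) := by
  obtain ⟨t₀, ht₀, hmin⟩ :=
    isCompact_Icc.exists_isMinOn (nonempty_Icc.2 zero_le_one) h.continuousOn
  have hmin : ∀ t ∈ Icc (0 : ℝ) 1, α (τ t₀) ≤ α (τ t) := isMinOn_iff.1 hmin
  have hlow : ∀ t ∈ Icc (0 : ℝ) 1, (⌈α (τ t₀)⌉ : ℝ) - 1 < α (τ t) := fun t ht => by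
    linarith [Int.ceil_lt_add_one (α (τ t₀)), hmin t ht]
  have hk0 : (⌈α (τ t₀)⌉ : ℝ) ≤ α (τ 0) := by
    have := hmin 0 (left_mem_Icc.2 zero_le_one)
    rw [h.apply_zero] at this ⊢
    exact_mod_cast Int.ceil_le.2 (by exact_mod_cast this)
  obtain ⟨t, ht, hkt⟩ := intermediate_value_Icc' ht₀.1
    (h.continuousOn.mono (Icc_subset_Icc_right ht₀.2)) ⟨Int.le_ceil _, hk0⟩
  have hatt : ∃ t ∈ Icc (0 : ℝ) 1, α (τ t) = ⌈α (τ t₀)⌉ := ⟨t, ⟨ht.1, ht.2.trans ht₀.2⟩, hkt⟩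
  exact ⟨_, qval_eq_of_forall_sub_one_lt _ hatt hlow, hatt, hlow⟩

namespace IsAdmissible

variable (h : IsAdmissible α τ)
include h

theorem levelSet_qval_nonempty : (levelSet (fun t => α (τ t)) 0 1 (Qval α τ)).Nonempty := by
  obtain ⟨k, hk, ⟨t, ht, htk⟩, -⟩ := h.exists_qval
  exact ⟨t, ht, htk.trans hk.symm⟩

theorem pval_add_qval {m : ℤ} (hm : α (τ 1) = m) : (Pval α τ : ℝ) + Qval α τ = α (τ 1) := by
  obtain ⟨k, hk, -⟩ := h.exists_qval
  rw [Pval, hk, hm, ← Int.cast_sub, Int.floor_intCast]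
  push_cast
  ring

theorem qTime_mem : qTime α τ ∈ Icc (0 : ℝ) 1 ∧ α (τ (qTime α τ)) = Qval α τ :=
  (isCompact_levelSet h.continuousOn).sInf_mem h.levelSet_qval_nonempty

theorem pTime_mem : pTime α τ ∈ Icc (0 : ℝ) 1 ∧ α (τ (pTime α τ)) = Qval α τ :=
  (isCompact_levelSet h.continuousOn).sSup_mem h.levelSet_qval_nonempty

theorem qval_lt_of_lt_qTime (hQ : Qval α τ < 0) (ht : 0 ≤ t) (htq : t < qTime α τ) :
    Qval α τ < α (τ t) :=
  (lt_iff_lt_of_lt_sInf_levelSet h.continuousOn ⟨ht, htq.le.trans h.qTime_mem.1.2⟩ htq).1.1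
    (by simpa [h.apply_zero] using hQ)

theorem qval_lt_of_pTime_lt (h1 : Qval α τ < α (τ 1)) (hpt : pTime α τ < t) (ht : t ≤ 1) :
    Qval α τ < α (τ t) :=
  (lt_iff_lt_of_sSup_levelSet_lt h.continuousOn ⟨h.pTime_mem.1.1.trans hpt.le, ht⟩ hpt).1.2 h1

theorem yTime_mem (hQ : Qval α τ ≤ -1) :
    yTime α τ ∈ Icc 0 (qTime α τ) ∧ α (τ (yTime α τ)) = Qval α τ + 1 := by
  obtain ⟨⟨hq0, hq1⟩, hgq⟩ := h.qTime_mem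
  have hg := h.continuousOn.mono (Icc_subset_Icc_right hq1)
  refine (isCompact_levelSet hg).sSup_mem (levelSet_nonempty hg hq0 ?_)
  rw [mem_uIcc]
  right
  simp only [h.apply_zero, hgq]
  constructor <;> linarith

theorem xTime_mem (hP : Qval α τ + 1 ≤ α (τ 1)) :
    xTime α τ ∈ Icc (pTime α τ) 1 ∧ α (τ (xTime α τ)) = Qval α τ + 1 := by
  obtain ⟨⟨hp0, hp1⟩, hgp⟩ := h.pTime_mem
  have hg := h.continuousOn.mono (Icc_subset_Icc_left hp0)
  refine (isCompact_levelSet hg).sInf_mem (levelSet_nonempty hg hp1 ?_)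
  rw [mem_uIcc]
  left
  simp only [hgp]
  constructor <;> linarith

theorem lt_of_yTime_lt (hQ : Qval α τ ≤ -1) (hyt : yTime α τ < t) (htq : t ≤ qTime α τ) :
    α (τ t) < Qval α τ + 1 := by
  obtain ⟨⟨-, hq1⟩, hgq⟩ := h.qTime_mem
  exact (lt_iff_lt_of_sSup_levelSet_lt (h.continuousOn.mono (Icc_subset_Icc_right hq1))
    ⟨(h.yTime_mem hQ).1.1.trans hyt.le, htq⟩ hyt).2.2 (by simp [hgq])

theorem lt_of_lt_xTime (hP : Qval α τ + 1 ≤ α (τ 1)) (hpt : pTime α τ ≤ t)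
    (htx : t < xTime α τ) : α (τ t) < Qval α τ + 1 := by
  obtain ⟨⟨hp0, -⟩, hgp⟩ := h.pTime_mem
  exact (lt_iff_lt_of_lt_sInf_levelSet (h.continuousOn.mono (Icc_subset_Icc_left hp0))
    ⟨hpt, htx.le.trans (h.xTime_mem hP).1.2⟩ htx).2.1 (by simp [hgp])

end IsAdmissible

end Paths

section RootOperatorSteps

variable {V : Type} [AddCommGroup V] [Module ℝ V] {α : Module.Dual ℝ V} {cα : V}
  {τ τ' : ℝ → V} {a b c s : ℝ}

/-- Both root operators have this shape: `e_α` with `(a, b, c) = (y, q, Q + 1)` and `f_α` with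
`(a, b, c) = (p, x, Q)`. -/
def reflectSegment (α : Module.Dual ℝ V) (cα : V) (a b c : ℝ) (τ : ℝ → V) : ℝ → V := fun s =>
  if s ≤ a then τ s
  else if s ≤ b then τ s - (α (τ s) - c) • cα
  else τ s - τ b + (τ b - (α (τ b) - c) • cα)

theorem apply_reflectSegment_of_le (hs : s ≤ a) :
    α (reflectSegment α cα a b c τ s) = α (τ s) := by
  simp [reflectSegment, hs]

theorem apply_reflectSegment_of_mem (hα : α cα = 2) (has : a < s) (hsb : s ≤ b) :
    α (reflectSegment α cα a b c τ s) = 2 * c - α (τ s) := by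
  simp [reflectSegment, has.not_ge, hsb, hα]
  ring

theorem apply_reflectSegment_of_lt (hα : α cα = 2) (hab : a ≤ b) (hbs : b < s) :
    α (reflectSegment α cα a b c τ s) = α (τ s) - 2 * (α (τ b) - c) := by
  simp [reflectSegment, (hab.trans_lt hbs).not_ge, hbs.not_ge, hα]
  ring

theorem apply_reflectSegment_eq (hα : α cα = 2) (hab : a ≤ b) (ha : α (τ a) = c) :
    α (reflectSegment α cα a b c τ s) = α (τ s) - 2 * (α (τ (max a (min s b))) - c) := by
  rcases le_or_gt s a with hsa | has
  · rw [apply_reflectSegment_of_le hsa, min_eq_left (hsa.trans hab), max_eq_left hsa, ha]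
    ring
  rcases le_or_gt s b with hsb | hbs
  · rw [apply_reflectSegment_of_mem hα has hsb, min_eq_left hsb, max_eq_right has.le]
    ring
  · rw [apply_reflectSegment_of_lt hα hab hbs, min_eq_right hbs.le, max_eq_right hab]

theorem IsAdmissible.reflectSegment_of_apply_eq (h : IsAdmissible α τ) (hα : α cα = 2)
    (ha0 : 0 ≤ a) (hab : a ≤ b) (hb1 : b ≤ 1) (ha : α (τ a) = c) :
    IsAdmissible α (reflectSegment α cα a b c τ) where
  continuousOn := by
    have hclamp : MapsTo (fun s => max a (min s b)) (Icc 0 1) (Icc 0 1) := fun s _ =>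
      ⟨ha0.trans (le_max_left _ _), max_le (hab.trans hb1) ((min_le_right _ _).trans hb1)⟩
    have hτclamp := h.continuousOn.comp
      (continuous_const.max (continuous_id.min continuous_const)).continuousOn hclamp
    exact (h.continuousOn.sub (continuousOn_const.mul (hτclamp.sub continuousOn_const))).congr
      fun s _ => apply_reflectSegment_eq hα hab ha
  apply_zero := by rw [apply_reflectSegment_of_le ha0, h.apply_zero]

theorem isSome_eOp_iff : (eOp α cα τ).isSome ↔ Qval α τ ≤ -1 := by
  unfold eOp
  split_ifs with hQ <;> simp [hQ]

theorem mem_eOp_iff : τ' ∈ eOp α cα τ ↔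
    Qval α τ ≤ -1 ∧ τ' = reflectSegment α cα (yTime α τ) (qTime α τ) (Qval α τ + 1) τ := by
  unfold eOp reflectSegment
  split_ifs with hQ <;> simp [hQ, eq_comm]

theorem isSome_fOp_iff : (fOp α cα τ).isSome ↔ 1 ≤ Pval α τ := by
  unfold fOp
  split_ifs with hP <;> simp [hP]

theorem mem_fOp_iff : τ' ∈ fOp α cα τ ↔
    1 ≤ Pval α τ ∧ τ' = reflectSegment α cα (pTime α τ) (xTime α τ) (Qval α τ) τ := by
  unfold fOp reflectSegment
  split_ifs with hP <;> simp [hP, eq_comm]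

theorem one_le_pval_iff : 1 ≤ Pval α τ ↔ Qval α τ + 1 ≤ α (τ 1) := by
  rw [Pval, Int.le_floor, Int.cast_one, le_sub_iff_add_le']

namespace IsAdmissible

variable (h : IsAdmissible α τ) (hα : α cα = 2)
include h hα

theorem of_mem_eOp (hτ' : τ' ∈ eOp α cα τ) : IsAdmissible α τ' := by
  obtain ⟨hQ, rfl⟩ := mem_eOp_iff.1 hτ'
  obtain ⟨⟨hy0, hyq⟩, hgy⟩ := h.yTime_mem hQ
  exact h.reflectSegment_of_apply_eq hα hy0 hyq h.qTime_mem.1.2 hgy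

theorem of_mem_fOp (hτ' : τ' ∈ fOp α cα τ) : IsAdmissible α τ' := by
  obtain ⟨hP, rfl⟩ := mem_fOp_iff.1 hτ'
  obtain ⟨⟨hp0, -⟩, hgp⟩ := h.pTime_mem
  obtain ⟨⟨hpx, hx1⟩, -⟩ := h.xTime_mem (one_le_pval_iff.1 hP)
  exact h.reflectSegment_of_apply_eq hα hp0 hpx hx1 hgp

/-- After `e_α` the path stays above `Q` (before `y` by minimality of `q`, between `y` and `q`
by maximality of `y`, after `q` since it is shifted up by `2`) and reaches `Q + 1` at `y`. -/
theorem qval_of_mem_eOp (hτ' : τ' ∈ eOp α cα τ) : Qval α τ' = Qval α τ + 1 := by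
  obtain ⟨hQ, rfl⟩ := mem_eOp_iff.1 hτ'
  obtain ⟨k, hk, -, hlow⟩ := h.exists_qval
  obtain ⟨⟨-, hq1⟩, hgq⟩ := h.qTime_mem
  obtain ⟨⟨hy0, hyq⟩, hgy⟩ := h.yTime_mem hQ
  have hyq' : yTime α τ < qTime α τ :=
    hyq.lt_of_ne fun he => by rw [he, hgq] at hgy; linarith
  rw [hk]
  refine (qval_eq_of_forall_sub_one_lt (k + 1) ⟨yTime α τ, ⟨hy0, hyq.trans hq1⟩, ?_⟩
    fun t ht => ?_).trans (by push_cast; rfl)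
  · rw [apply_reflectSegment_of_le le_rfl, hgy, hk]
    push_cast
    rfl
  push_cast
  rcases le_or_gt t (yTime α τ) with hty | hyt
  · rw [apply_reflectSegment_of_le hty]
    linarith [h.qval_lt_of_lt_qTime (by linarith) ht.1 (hty.trans_lt hyq')]
  rcases le_or_gt t (qTime α τ) with htq | hqt
  · rw [apply_reflectSegment_of_mem hα hyt htq]
    linarith [h.lt_of_yTime_lt hQ hyt htq]
  · rw [apply_reflectSegment_of_lt hα hyq hqt, hgq]
    linarith [hlow t ht]

/-- After `f_α` the path stays above `Q - 2` (up to `p` because `Q` is its least integer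
value, between `p` and `x` by minimality of `x`, after `x`, where it is shifted down by `2`,
by maximality of `p`) and reaches `Q - 1` at `x`. -/
theorem qval_of_mem_fOp (hτ' : τ' ∈ fOp α cα τ) : Qval α τ' = Qval α τ - 1 := by
  obtain ⟨hP, rfl⟩ := mem_fOp_iff.1 hτ'
  rw [one_le_pval_iff] at hP
  obtain ⟨k, hk, -, hlow⟩ := h.exists_qval
  obtain ⟨⟨hp0, -⟩, hgp⟩ := h.pTime_mem
  obtain ⟨⟨hpx, hx1⟩, hgx⟩ := h.xTime_mem hP
  have hpx' : pTime α τ < xTime α τ :=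
    hpx.lt_of_ne fun he => by rw [← he, hgp] at hgx; linarith
  rw [hk]
  refine (qval_eq_of_forall_sub_one_lt (k - 1) ⟨xTime α τ, ⟨hp0.trans hpx, hx1⟩, ?_⟩
    fun t ht => ?_).trans (by push_cast; rfl)
  · rw [apply_reflectSegment_of_mem hα hpx' le_rfl, hgx, hk]
    push_cast
    ring
  push_cast
  rcases le_or_gt t (pTime α τ) with htp | hpt
  · rw [apply_reflectSegment_of_le htp]
    linarith [hlow t ht]
  rcases le_or_gt t (xTime α τ) with htx | hxt
  · rw [apply_reflectSegment_of_mem hα hpt htx]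
    have hle : α (τ t) ≤ Qval α τ + 1 := htx.lt_or_eq.elim
      (fun htx => (h.lt_of_lt_xTime hP hpt.le htx).le) fun he => (he ▸ hgx).le
    linarith
  · rw [apply_reflectSegment_of_lt hα hpx hxt, hgx]
    linarith [h.qval_lt_of_pTime_lt (by linarith) (hpx'.trans hxt) ht.2]

theorem apply_one_of_mem_fOp (hτ' : τ' ∈ fOp α cα τ) : α (τ' 1) = α (τ 1) - 2 := by
  obtain ⟨hP, rfl⟩ := mem_fOp_iff.1 hτ'
  rw [one_le_pval_iff] at hP
  obtain ⟨⟨hpx, hx1⟩, hgx⟩ := h.xTime_mem hP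
  rcases hx1.lt_or_eq with hx1 | hx1
  · rw [apply_reflectSegment_of_lt hα hpx hx1, hgx]
    ring
  · have hg1 : α (τ 1) = Qval α τ + 1 := hx1 ▸ hgx
    have hp1 : pTime α τ < 1 :=
      h.pTime_mem.1.2.lt_of_ne fun he => by rw [← he, h.pTime_mem.2] at hg1; linarith
    rw [apply_reflectSegment_of_mem hα hp1 hx1.ge, hg1]
    ring

theorem pval_of_mem_fOp (hτ' : τ' ∈ fOp α cα τ) : Pval α τ' = Pval α τ - 1 := by
  rw [Pval, Pval, h.apply_one_of_mem_fOp hα hτ', h.qval_of_mem_fOp hα hτ', ← Int.floor_sub_one]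
  ring_nf

end IsAdmissible

end RootOperatorSteps

section Iterates

variable {V : Type} [AddCommGroup V] [Module ℝ V]

theorem eIter_eq_iterate (α : Module.Dual ℝ V) (cα : V) (n : ℕ) (π : ℝ → V) :
    eIter α cα n π = (fun o => o.bind (eOp α cα))^[n] (some π) := by
  induction n with
  | zero => rfl
  | succ n ih => rw [Function.iterate_succ_apply', ← ih]; rfl

theorem fIter_eq_iterate (α : Module.Dual ℝ V) (cα : V) (n : ℕ) (π : ℝ → V) :
    fIter α cα n π = (fun o => o.bind (fOp α cα))^[n] (some π) := by
  induction n with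
  | zero => rfl
  | succ n ih => rw [Function.iterate_succ_apply', ← ih]; rfl

end Iterates

theorem eIter_fIter_defined_iff_general
    {V : Type} [AddCommGroup V] [Module ℝ V]
    (S : RootSystemSetup V) (i : S.I) (π : ℝ → V)
    (hPL : PiecewiseLinear π) (h0 : π 0 = 0) :
    (∀ n : ℕ, 1 ≤ n →
      ((eIter (S.simpleRoot i) (S.coroot (S.simpleRoot i)) n π).isSome ↔
        (n : ℝ) ≤ -Qval (S.simpleRoot i) π)) ∧
    (∀ n : ℕ, 1 ≤ n →
      ((fIter (S.simpleRoot i) (S.coroot (S.simpleRoot i)) n π).isSome ↔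
        (n : ℤ) ≤ Pval (S.simpleRoot i) π)) ∧
    (π 1 ∈ S.Pvee →
      (Pval (S.simpleRoot i) π : ℝ) + Qval (S.simpleRoot i) π = S.simpleRoot i (π 1)) := by
  have hα := S.pairing_self _ (S.simple_mem i)
  have hπ : IsAdmissible (S.simpleRoot i) π := ⟨hPL.continuousOn_comp _, by rw [h0, map_zero]⟩
  refine ⟨fun n hn => ?_, fun n hn => ?_, fun h1 => ?_⟩
  · rw [eIter_eq_iterate]
    refine isSome_bind_iterate_iff (N := fun τ => -Qval (S.simpleRoot i) τ)
      (fun _ _ => isSome_eOp_iff.trans le_neg.symm) (fun τ hτ τ' hτ' => ?_) hn hπ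
    exact ⟨hτ.of_mem_eOp hα hτ', by rw [hτ.qval_of_mem_eOp hα hτ']; ring⟩
  · rw [fIter_eq_iterate]
    exact isSome_bind_iterate_iff (fun _ _ => isSome_fOp_iff)
      (fun τ hτ τ' hτ' => ⟨hτ.of_mem_fOp hα hτ', hτ.pval_of_mem_fOp hα hτ'⟩) hn hπ
  · obtain ⟨m, hm⟩ := h1 _ (S.simple_mem i)
    exact hπ.pval_add_qval hm

/-- Let `π` be a piecewise linear path with `π(0) = 0` and `α` a simple
root, with `Q` and `P` as in the definition of the root operators. For all `n ≥ 1`,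
`(e_α)^n π` is defined iff `n ≤ −Q`, and `(f_α)^n π` is defined iff `n ≤ P`. Moreover, if
`π(1) ∈ P^∨` then `P + Q = α(π(1))`. -/
theorem eIter_fIter_defined_iff
    {V : Type} [AddCommGroup V] [Module ℝ V] [FiniteDimensional ℝ V]
    (S : RootSystemSetup V) (i : S.I) (π : ℝ → V)
    (hPL : PiecewiseLinear π) (h0 : π 0 = 0) :
    (∀ n : ℕ, 1 ≤ n →
      ((eIter (S.simpleRoot i) (S.coroot (S.simpleRoot i)) n π).isSome ↔
        (n : ℝ) ≤ -Qval (S.simpleRoot i) π)) ∧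
    (∀ n : ℕ, 1 ≤ n →
      ((fIter (S.simpleRoot i) (S.coroot (S.simpleRoot i)) n π).isSome ↔
        (n : ℤ) ≤ Pval (S.simpleRoot i) π)) ∧
    (π 1 ∈ S.Pvee →
      (Pval (S.simpleRoot i) π : ℝ) + Qval (S.simpleRoot i) π = S.simpleRoot i (π 1)) :=
  eIter_fIter_defined_iff_general S i π hPL h0
end
end

section
/- Let X be a complete metric space such that every pair of points x, y ∈ X admits a midpoint m (i.e. d(x,m) = d(y,m) = d(x,y)/2) satisfying the (CN) inequality: for every z ∈ X, d(z,m)² ≤ (1/2)·d(z,x)² + (1/2)·d(z,y)² − (1/4)·d(x,y)². Let φ : X → X be a 1-Lipschitz map. If there exists x ∈ X such that the forward orbit {φⁿ(x) : n ≥ 0} is bounded, then φ has a fixed point in X. -/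
/-!
Let `r(z) = limsup_n d(φⁿ x, z)` be the asymptotic radius of the bounded orbit. Since `φ` is
`1`-Lipschitz, `r (φ z) ≤ r z`, and `r` is `1`-Lipschitz. The (CN) inequality passes to the
limsup, so `r²` satisfies (CN) itself; hence minimizing sequences of `r²` are Cauchy and,
by completeness, `r²` attains its minimum at some `c`. Then `φ c` is a minimizer too, and
(CN) at a midpoint `m` of `c` and `φ c` gives `min r² ≤ r(m)² ≤ min r² - d(c, φ c)² / 4`,
so `φ c = c`.
-/

open Filter

section StrongMidpointConvexity

variable {X : Type*} [PseudoMetricSpace X] {f : X → ℝ}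

lemma dist_sq_le_of_le_iInf_add (hbdd : BddBelow (Set.range f))
    (hconv : ∀ y w : X, ∃ m : X,
      f m ≤ (1 / 2) * f y + (1 / 2) * f w - (1 / 4) * dist y w ^ 2)
    {y w : X} {a b : ℝ} (hy : f y ≤ (⨅ z, f z) + a) (hw : f w ≤ (⨅ z, f z) + b) :
    dist y w ^ 2 ≤ 2 * (a + b) := by
  obtain ⟨m, hm⟩ := hconv y w
  linarith [ciInf_le hbdd m]

theorem Continuous.exists_forall_le_of_strong_midpoint_convex [CompleteSpace X] [Nonempty X]
    (hf : Continuous f) (hbdd : BddBelow (Set.range f))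
    (hconv : ∀ y w : X, ∃ m : X,
      f m ≤ (1 / 2) * f y + (1 / 2) * f w - (1 / 4) * dist y w ^ 2) :
    ∃ c : X, ∀ z : X, f c ≤ f z := by
  set s := ⨅ z, f z
  have hu : ∀ n : ℕ, ∃ z, f z < s + 1 / ((n : ℝ) + 1) := fun n =>
    exists_lt_of_ciInf_lt (lt_add_of_pos_right _ Nat.one_div_pos_of_nat)
  choose u hu using hu
  have hcauchy : CauchySeq u := by
    refine cauchySeq_of_le_tendsto_0 (fun N : ℕ => √(4 * (1 / ((N : ℝ) + 1))))
      (fun n k N hn hk => ?_) ?_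
    · rw [Real.le_sqrt dist_nonneg (by positivity)]
      have := dist_sq_le_of_le_iInf_add hbdd hconv (hu n).le (hu k).le
      linarith [Nat.one_div_le_one_div (α := ℝ) hn, Nat.one_div_le_one_div (α := ℝ) hk]
    · simpa using ((tendsto_one_div_add_atTop_nhds_zero_nat (𝕜 := ℝ)).const_mul 4).sqrt
  obtain ⟨c, hc⟩ := cauchySeq_tendsto_of_complete hcauchy
  refine ⟨c, fun z => le_trans ?_ (ciInf_le hbdd z)⟩
  simpa using le_of_tendsto_of_tendsto' ((hf.tendsto c).comp hc)
    (tendsto_const_nhds.add tendsto_one_div_add_atTop_nhds_zero_nat) fun n => (hu n).le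

end StrongMidpointConvexity

section AsymptoticRadius

variable {X : Type*} [PseudoMetricSpace X]

noncomputable def asymptoticRadius (p : ℕ → X) (z : X) : ℝ :=
  limsup (fun n => dist (p n) z) atTop

variable {p : ℕ → X}

lemma exists_forall_dist_le (hp : Bornology.IsBounded (Set.range p)) (z : X) :
    ∃ R : ℝ, ∀ n, dist (p n) z ≤ R := by
  obtain ⟨R, hR⟩ := hp.subset_closedBall z
  exact ⟨R, fun n => hR ⟨n, rfl⟩⟩

lemma isBoundedUnder_dist_pow (hp : Bornology.IsBounded (Set.range p)) (z : X) (k : ℕ) :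
    IsBoundedUnder (· ≤ ·) atTop fun n => dist (p n) z ^ k := by
  obtain ⟨R, hR⟩ := exists_forall_dist_le hp z
  exact isBoundedUnder_of ⟨R ^ k, fun n => pow_le_pow_left₀ dist_nonneg (hR n) k⟩

lemma isCoboundedUnder_dist_pow (z : X) (k : ℕ) :
    IsCoboundedUnder (· ≤ ·) atTop fun n => dist (p n) z ^ k :=
  isCoboundedUnder_le_of_le atTop fun _ => pow_nonneg dist_nonneg k

lemma isBoundedUnder_dist (hp : Bornology.IsBounded (Set.range p)) (z : X) :
    IsBoundedUnder (· ≤ ·) atTop fun n => dist (p n) z := by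
  simpa using isBoundedUnder_dist_pow hp z 1

lemma isCoboundedUnder_dist (z : X) :
    IsCoboundedUnder (· ≤ ·) atTop fun n => dist (p n) z := by
  simpa using isCoboundedUnder_dist_pow (p := p) z 1

lemma asymptoticRadius_nonneg (hp : Bornology.IsBounded (Set.range p)) (z : X) :
    0 ≤ asymptoticRadius p z :=
  le_limsup_of_frequently_le (.of_forall fun _ => dist_nonneg) (isBoundedUnder_dist hp z)

lemma asymptoticRadius_le_add_dist (hp : Bornology.IsBounded (Set.range p)) (z w : X) :
    asymptoticRadius p z ≤ asymptoticRadius p w + dist z w := by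
  calc asymptoticRadius p z
      ≤ limsup (fun n => dist (p n) w + dist z w) atTop :=
        limsup_le_limsup (Eventually.of_forall fun n => by
            simpa [dist_comm z w] using dist_triangle (p n) w z)
          (isCoboundedUnder_dist z)
          (isBoundedUnder_le_add (isBoundedUnder_dist hp w) isBoundedUnder_const)
    _ = asymptoticRadius p w + dist z w :=
        limsup_add_const atTop _ _ (isBoundedUnder_dist hp w) (isCoboundedUnder_dist w)

lemma lipschitzWith_asymptoticRadius (hp : Bornology.IsBounded (Set.range p)) :
    LipschitzWith 1 (asymptoticRadius p) :=
  LipschitzWith.of_le_add (asymptoticRadius_le_add_dist hp)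

lemma limsup_dist_sq (hp : Bornology.IsBounded (Set.range p)) (z : X) :
    limsup (fun n => dist (p n) z ^ 2) atTop = asymptoticRadius p z ^ 2 := by
  -- `t ↦ max t 0 ^ 2` is monotone and agrees with squaring on `[0, ∞)`
  have hmono : Monotone fun t : ℝ => max t 0 ^ 2 := fun a b hab =>
    pow_le_pow_left₀ (le_max_right _ _) (max_le_max_right 0 hab) 2
  have := hmono.map_limsup_of_continuousAt (fun n => dist (p n) z) (by fun_prop)
    (isBoundedUnder_dist hp z) (isCoboundedUnder_dist z)
  have h0 : 0 ≤ limsup (fun n => dist (p n) z) atTop := asymptoticRadius_nonneg hp z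
  simpa [Function.comp_def, asymptoticRadius, max_eq_left h0] using this.symm

lemma asymptoticRadius_sq_le_of_forall_dist_sq_le (hp : Bornology.IsBounded (Set.range p))
    {y w m : X} (hm : ∀ z : X, dist z m ^ 2 ≤
      (1 / 2) * dist z y ^ 2 + (1 / 2) * dist z w ^ 2 - (1 / 4) * dist y w ^ 2) :
    asymptoticRadius p m ^ 2 ≤
      (1 / 2) * asymptoticRadius p y ^ 2 + (1 / 2) * asymptoticRadius p w ^ 2
        - (1 / 4) * dist y w ^ 2 := by
  simp only [← limsup_dist_sq hp]
  refine le_of_forall_pos_le_add fun ε hε => limsup_le_of_le (isCoboundedUnder_dist_pow m 2) ?_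
  filter_upwards
    [eventually_lt_of_limsup_lt (lt_add_of_pos_right _ hε) (isBoundedUnder_dist_pow hp y 2),
      eventually_lt_of_limsup_lt (lt_add_of_pos_right _ hε) (isBoundedUnder_dist_pow hp w 2)]
    with n hy hw
  linarith [hm (p n)]

lemma asymptoticRadius_le_of_forall_dist_succ_le (hp : Bornology.IsBounded (Set.range p))
    {y z : X} (h : ∀ n, dist (p (n + 1)) y ≤ dist (p n) z) :
    asymptoticRadius p y ≤ asymptoticRadius p z := by
  rw [asymptoticRadius, ← limsup_nat_add _ 1]
  exact limsup_le_limsup (Eventually.of_forall h)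
    (isCoboundedUnder_le_of_le atTop fun _ => dist_nonneg) (isBoundedUnder_dist hp z)

end AsymptoticRadius

/-- Let `X` be a complete metric space in which every pair of points
`x, y` admits a midpoint `m` (`d(x,m) = d(y,m) = d(x,y)/2`) satisfying the (CN) inequality
of Bruhat–Tits: `d(z,m)² ≤ (1/2)·d(z,x)² + (1/2)·d(z,y)² − (1/4)·d(x,y)²` for all `z`.
If `φ : X → X` is `1`-Lipschitz and some forward orbit `{φⁿ(x) : n ≥ 0}` is bounded,
then `φ` has a fixed point. -/
theorem fixed_point_of_bounded_orbit
    {X : Type*} [MetricSpace X] [CompleteSpace X]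
    (hmid : ∀ x y : X, ∃ m : X, dist x m = dist x y / 2 ∧ dist y m = dist x y / 2 ∧
      ∀ z : X, dist z m ^ 2 ≤
        (1 / 2) * dist z x ^ 2 + (1 / 2) * dist z y ^ 2 - (1 / 4) * dist x y ^ 2)
    (φ : X → X) (hφ : ∀ x y : X, dist (φ x) (φ y) ≤ dist x y)
    (x : X) (hx : Bornology.IsBounded (Set.range fun n : ℕ => φ^[n] x)) :
    ∃ z : X, φ z = z := by
  have : Nonempty X := ⟨x⟩
  set r := asymptoticRadius fun n => φ^[n] x
  have hconv : ∀ y w : X, ∃ m : X,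
      r m ^ 2 ≤ (1 / 2) * r y ^ 2 + (1 / 2) * r w ^ 2 - (1 / 4) * dist y w ^ 2 := fun y w =>
    let ⟨m, _, _, hm⟩ := hmid y w
    ⟨m, asymptoticRadius_sq_le_of_forall_dist_sq_le hx hm⟩
  have hcont : Continuous fun z => r z ^ 2 :=
    (lipschitzWith_asymptoticRadius hx).continuous.pow 2
  obtain ⟨c, hc⟩ := hcont.exists_forall_le_of_strong_midpoint_convex
    ⟨0, by rintro _ ⟨z, rfl⟩; positivity⟩ hconv
  have hφc : r (φ c) ≤ r c := asymptoticRadius_le_of_forall_dist_succ_le hx fun n => by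
    simpa only [Function.iterate_succ_apply'] using hφ (φ^[n] x) c
  have hφc_sq : r (φ c) ^ 2 ≤ r c ^ 2 :=
    pow_le_pow_left₀ (asymptoticRadius_nonneg hx _) hφc 2
  obtain ⟨m, hm⟩ := hconv c (φ c)
  have hdist : dist c (φ c) ^ 2 ≤ 0 := by linarith [hc m]
  exact ⟨c, (dist_eq_zero.mp (sq_nonpos_iff _ |>.mp hdist)).symm⟩
end
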